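/- Let K ≥ 3, L ≥ 1 and let X be a balanced K×L matrix with entries in {0,1}, with balanced parameters a, b, c satisfying a ≠ b and a + (K−1)b ≠ 0. Let λ ∈ ℝ^K have nonnegative entries with ‖λ‖₁ = Σ_{k=1}^{K} λ_k, and let λ_n be a nonnegative real number. Then X Xᵀ is invertible and Tr( (X Xᵀ)⁻¹ X diag(Xᵀ λ) Xᵀ (X Xᵀ)⁻¹ ) + λ_n · Tr((X Xᵀ)⁻¹) = λ_n K (1 − b/(a+(K−1)b)) / (L(a−b)) + (‖λ‖₁/(L(a−b)²)) · ( a + (K−1)b + ((2−K)b² − 2ab)/(a+(K−1)b)² · ( a + 3b(K−1) + c(K−1)(K−2) ) ), where diag(v) denotes the diagonal matrix with diagonal entries given by the vector v. -/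

import Mathlib

/-!
Balancedness makes the Gram matrix `X Xᵀ = L (a - b) I + L b J`, with `J` the all-ones
matrix. Matrices `p I + q J` form a commutative algebra (`J² = K J`), so `(X Xᵀ)⁻¹` and its
square lie in it. Hence the first trace is `p² tr W + s 1ᵀ W 1` for `W = X diag(Xᵀ λ) Xᵀ`,
and both `tr W` and `1ᵀ W 1` are sums of `λ_j ζ_X({j, k, i})` over triples of rows, which
balancedness evaluates by counting which of `j, k, i` coincide.
-/

open Finset Matrix

variable {R : Type*} {m n : Type*}

section OnesMatrix

variable [Fintype m]

theorem of_one_mul_of_one [Semiring R] :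
    (of 1 : Matrix m m R) * of 1 = (Fintype.card m : R) • of 1 := by
  ext i j; simp [mul_apply]

theorem smul_one_add_smul_of_one_mul [DecidableEq m] [CommSemiring R] (p q p' q' : R) :
    (p • 1 + q • of 1 : Matrix m m R) * (p' • 1 + q' • of 1)
      = (p * p') • 1 + (p * q' + q * p' + Fintype.card m * q * q') • of 1 := by
  simp only [add_mul, mul_add, smul_mul_smul_comm, mul_one, one_mul, of_one_mul_of_one,
    smul_smul]
  module

theorem smul_one_add_smul_of_one_mul_eq_one [DecidableEq m] [Field R] {α β γ : R}
    (hα : α ≠ 0) (hγ : α + Fintype.card m * β = γ) (hγ0 : γ ≠ 0) :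
    (α • 1 + β • of 1 : Matrix m m R) * (α⁻¹ • 1 + (-β / (α * γ)) • of 1) = 1 := by
  have hcoef :
      α * (-β / (α * γ)) + β * α⁻¹ + Fintype.card m * β * (-β / (α * γ)) = 0 := by
    rw [← hγ] at hγ0 ⊢
    grind
  rw [smul_one_add_smul_of_one_mul, mul_inv_cancel₀ hα, hcoef, one_smul, zero_smul, add_zero]

theorem trace_smul_one_add_smul_of_one [DecidableEq m] [CommSemiring R] (p q : R) :
    trace (p • 1 + q • of 1 : Matrix m m R) = Fintype.card m * (p + q) := by
  simp [trace, mul_add]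

theorem trace_of_one_mul [Semiring R] (W : Matrix m m R) :
    trace (of 1 * W) = ∑ i, ∑ j, W i j := by
  simp only [trace, diag_apply, mul_apply, of_apply, Pi.one_apply, one_mul]
  exact Finset.sum_comm

theorem trace_smul_one_add_smul_of_one_mul [DecidableEq m] [CommSemiring R] (p q : R)
    (W : Matrix m m R) :
    trace ((p • 1 + q • of 1) * W) = p * trace W + q * ∑ i, ∑ j, W i j := by
  simp only [add_mul, Matrix.smul_mul, one_mul, trace_add, trace_smul, trace_of_one_mul,
    smul_eq_mul]

theorem trace_mul_mul_smul_one_add_smul_of_one [DecidableEq m] [CommSemiring R] (p q : R)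
    (W : Matrix m m R) :
    trace ((p • 1 + q • of 1) * W * (p • 1 + q • of 1))
      = p ^ 2 * trace W + (2 * p * q + Fintype.card m * q ^ 2) * ∑ i, ∑ j, W i j := by
  rw [trace_mul_cycle, smul_one_add_smul_of_one_mul, trace_smul_one_add_smul_of_one_mul]
  ring

end OnesMatrix

variable [Fintype n]

theorem mul_diagonal_mulVec_mul_transpose_apply [Fintype m] [DecidableEq n] [CommSemiring R]
    (X : Matrix m n R) (v : m → R) (k i : m) :
    (X * diagonal (Xᵀ *ᵥ v) * Xᵀ) k i = ∑ j, v j * ∑ l, X j l * X k l * X i l := by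
  rw [mul_apply]
  simp only [mul_diagonal, mulVec, dotProduct, transpose_apply, Finset.mul_sum, Finset.sum_mul]
  rw [Finset.sum_comm]
  refine Finset.sum_congr rfl fun j _ => Finset.sum_congr rfl fun l _ => by ring

/-- `A`, `B`, `C` are the values of `ζ_X` on sets of one, two and three rows (`L a`, `L b`,
`L c` in the paper's normalisation); `mul_self` says the entries are `0` or `1`. -/
structure IsBalancedBinary [CommSemiring R] (X : Matrix m n R) (A B C : R) : Prop where
  mul_self : ∀ i l, X i l * X i l = X i l
  sum_row : ∀ i, ∑ l, X i l = A
  sum_mul_row : ∀ i j, i ≠ j → ∑ l, X i l * X j l = B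
  sum_mul_mul_row : ∀ i j k, i ≠ j → i ≠ k → j ≠ k → ∑ l, X i l * X j l * X k l = C

namespace IsBalancedBinary

variable [CommRing R] {X : Matrix m n R} {A B C : R}

theorem sum_mul_row_self (hX : IsBalancedBinary X A B C) (i : m) : ∑ l, X i l * X i l = A := by
  simp only [hX.mul_self, hX.sum_row]

theorem gram_eq [Fintype m] [DecidableEq m] (hX : IsBalancedBinary X A B C) :
    X * Xᵀ = (A - B) • 1 + B • of 1 := by
  ext i j
  rw [mul_apply]
  by_cases h : i = j
  · subst h
    simp [hX.sum_mul_row_self]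
  · simp [h, hX.sum_mul_row i j h]

/-- Inclusion–exclusion over the coincidences among `i, j, k`, written so that sums over the
indices are read off with `Finset.sum_ite_eq`. -/
theorem sum_mul_mul_eq [DecidableEq m] (hX : IsBalancedBinary X A B C) (i j k : m) :
    ∑ l, X i l * X j l * X k l
      = C + (if i = j then B - C else 0) + (if i = k then B - C else 0)
        + (if j = k then B - C else 0)
        + (if i = j then if i = k then A - 3 * B + 2 * C else 0 else 0) := by
  rcases eq_or_ne i j with rfl | hij
  · rcases eq_or_ne i k with rfl | hik
    · simp only [hX.mul_self, hX.sum_row, ↓reduceIte]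
      ring
    · simp [hik, hX.mul_self, hX.sum_mul_row i k hik]
  · rcases eq_or_ne i k with rfl | hik
    · simp [hij, hij.symm, mul_right_comm _ (X j _), hX.mul_self, hX.sum_mul_row i j hij]
    · rcases eq_or_ne j k with rfl | hjk
      · simp [hij, mul_assoc, hX.mul_self, hX.sum_mul_row i j hij]
      · simp [hij, hik, hjk, hX.sum_mul_mul_row i j k hij hik hjk]

theorem sum_sum_mul_mul_self [Fintype m] [DecidableEq m] (hX : IsBalancedBinary X A B C) (j : m) :
    ∑ k, ∑ l, X j l * X k l * X k l = A + (Fintype.card m - 1) * B := by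
  simp only [hX.sum_mul_mul_eq, ↓reduceIte, sum_add_distrib, sum_const, card_univ, nsmul_eq_mul,
    sum_ite_eq, mem_univ]
  ring

theorem sum_sum_sum_mul_mul [Fintype m] [DecidableEq m] (hX : IsBalancedBinary X A B C) (j : m) :
    ∑ k, ∑ i, ∑ l, X j l * X k l * X i l
      = A + 3 * (Fintype.card m - 1) * B + (Fintype.card m - 1) * (Fintype.card m - 2) * C := by
  simp only [hX.sum_mul_mul_eq, sum_add_distrib, sum_const, card_univ, nsmul_eq_mul, mul_zero,
    sum_ite_eq, mem_univ, smul_ite, ↓reduceIte, sum_ite_irrel]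
  ring

theorem trace_mul_diagonal_mulVec_mul_transpose [Fintype m] [DecidableEq m] [DecidableEq n]
    (hX : IsBalancedBinary X A B C) (v : m → R) :
    trace (X * diagonal (Xᵀ *ᵥ v) * Xᵀ) = (∑ j, v j) * (A + (Fintype.card m - 1) * B) := by
  simp only [trace, diag_apply, mul_diagonal_mulVec_mul_transpose_apply]
  rw [Finset.sum_comm, Finset.sum_mul]
  simp only [← Finset.mul_sum, hX.sum_sum_mul_mul_self]

theorem sum_mul_diagonal_mulVec_mul_transpose [Fintype m] [DecidableEq m] [DecidableEq n]
    (hX : IsBalancedBinary X A B C) (v : m → R) :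
    ∑ k, ∑ i, (X * diagonal (Xᵀ *ᵥ v) * Xᵀ) k i
      = (∑ j, v j) * (A + 3 * (Fintype.card m - 1) * B
          + (Fintype.card m - 1) * (Fintype.card m - 2) * C) := by
  simp only [mul_diagonal_mulVec_mul_transpose_apply]
  rw [(Finset.sum_congr rfl fun _ _ => Finset.sum_comm).trans Finset.sum_comm, Finset.sum_mul]
  simp only [← Finset.mul_sum, hX.sum_sum_sum_mul_mul]

theorem of_sum_prod [DecidableEq m] (h01 : ∀ i l, X i l = 0 ∨ X i l = 1)
    (hA : ∀ Θ : Finset m, Θ.card = 1 → ∑ l, ∏ k ∈ Θ, X k l = A)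
    (hB : ∀ Θ : Finset m, Θ.card = 2 → ∑ l, ∏ k ∈ Θ, X k l = B)
    (hC : ∀ Θ : Finset m, Θ.card = 3 → ∑ l, ∏ k ∈ Θ, X k l = C) :
    IsBalancedBinary X A B C where
  mul_self i l := by rcases h01 i l with h | h <;> simp [h]
  sum_row i := by simpa using hA {i} (card_singleton i)
  sum_mul_row i j hij := by simpa [prod_pair hij] using hB {i, j} (card_pair hij)
  sum_mul_mul_row i j k hij hik hjk := by
    simpa [prod_insert, hij, hik, prod_pair hjk, mul_assoc] using
      hC {i, j, k} (card_eq_three.2 ⟨i, j, k, hij, hik, hjk, rfl⟩)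

end IsBalancedBinary

theorem stmt9_general (K L : ℕ) (hL : 1 ≤ L)
    (X : Matrix (Fin K) (Fin L) ℝ)
    (h01 : ∀ k l, X k l = 0 ∨ X k l = 1)
    (a b c : ℝ)
    (ha : ∀ Θ : Finset (Fin K), Θ.card = 1 →
      ∑ l : Fin L, ∏ k ∈ Θ, X k l = (L : ℝ) * a)
    (hb : ∀ Θ : Finset (Fin K), Θ.card = 2 →
      ∑ l : Fin L, ∏ k ∈ Θ, X k l = (L : ℝ) * b)
    (hc : ∀ Θ : Finset (Fin K), Θ.card = 3 →
      ∑ l : Fin L, ∏ k ∈ Θ, X k l = (L : ℝ) * c)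
    (hab : a ≠ b) (habK : a + ((K : ℝ) - 1) * b ≠ 0)
    (lam : Fin K → ℝ)
    (lam_n : ℝ) :
    IsUnit (X * Xᵀ)
    ∧ Matrix.trace ((X * Xᵀ)⁻¹ * X * Matrix.diagonal (Xᵀ.mulVec lam) * Xᵀ
          * (X * Xᵀ)⁻¹)
        + lam_n * Matrix.trace (X * Xᵀ)⁻¹
      = lam_n * (K : ℝ) * (1 - b / (a + ((K : ℝ) - 1) * b))
            / ((L : ℝ) * (a - b))
        + ((∑ k : Fin K, lam k) / ((L : ℝ) * (a - b) ^ 2))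
          * (a + ((K : ℝ) - 1) * b
            + ((2 - (K : ℝ)) * b ^ 2 - 2 * a * b)
                / (a + ((K : ℝ) - 1) * b) ^ 2
              * (a + 3 * b * ((K : ℝ) - 1)
                + c * ((K : ℝ) - 1) * ((K : ℝ) - 2))) := by
  have hX := IsBalancedBinary.of_sum_prod h01 ha hb hc
  have hL0 : (L : ℝ) ≠ 0 := Nat.cast_ne_zero.2 (by omega)
  have hα : (L : ℝ) * (a - b) ≠ 0 := mul_ne_zero hL0 (sub_ne_zero.2 hab)
  have hγ : (L : ℝ) * (a - b) + Fintype.card (Fin K) * (L * b) = L * (a + (K - 1) * b) := by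
    rw [Fintype.card_fin]
    ring
  set N := ((L : ℝ) * (a - b))⁻¹ • (1 : Matrix (Fin K) (Fin K) ℝ)
    + (-(L * b) / (L * (a - b) * (L * (a + (K - 1) * b)))) • of 1
  have hGN : X * Xᵀ * N = 1 := by
    rw [hX.gram_eq, ← mul_sub]
    exact smul_one_add_smul_of_one_mul_eq_one hα hγ (mul_ne_zero hL0 habK)
  refine ⟨.of_mul_eq_one _ hGN, ?_⟩
  rw [inv_eq_right_inv hGN, show N * X * diagonal (Xᵀ *ᵥ lam) * Xᵀ * N
      = N * (X * diagonal (Xᵀ *ᵥ lam) * Xᵀ) * N by simp only [Matrix.mul_assoc],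
    trace_mul_mul_smul_one_add_smul_of_one, trace_smul_one_add_smul_of_one,
    hX.trace_mul_diagonal_mulVec_mul_transpose, hX.sum_mul_diagonal_mulVec_mul_transpose,
    Fintype.card_fin]
  field_simp
  ring

/-- For a balanced `K × L` `{0,1}` matrix `X` (`K ≥ 3`, `L ≥ 1`)
with balanced parameters `a, b, c`, `a ≠ b`, `a + (K−1)b ≠ 0`, a nonnegative
vector `λ ∈ ℝ^K` and a nonnegative noise intensity `λ_n`, the matrix `X Xᵀ` is
invertible and the estimation MSE
`Tr((X Xᵀ)⁻¹ X diag(Xᵀ λ) Xᵀ (X Xᵀ)⁻¹) + λ_n Tr((X Xᵀ)⁻¹)` equals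
`λ_n K (1 − b/(a+(K−1)b)) / (L(a−b))
 + (‖λ‖₁/(L(a−b)²)) (a + (K−1)b
     + ((2−K)b² − 2ab)/(a+(K−1)b)² (a + 3b(K−1) + c(K−1)(K−2)))`. -/
theorem stmt9 (K L : ℕ) (hK : 3 ≤ K) (hL : 1 ≤ L)
    (X : Matrix (Fin K) (Fin L) ℝ)
    (h01 : ∀ k l, X k l = 0 ∨ X k l = 1)
    (hbal : ∀ Θ₁ Θ₂ : Finset (Fin K), Θ₁.Nonempty → Θ₂.Nonempty →
      Θ₁.card = Θ₂.card →
      ∑ l : Fin L, ∏ k ∈ Θ₁, X k l = ∑ l : Fin L, ∏ k ∈ Θ₂, X k l)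
    (a b c : ℝ)
    (ha : ∀ Θ : Finset (Fin K), Θ.card = 1 →
      ∑ l : Fin L, ∏ k ∈ Θ, X k l = (L : ℝ) * a)
    (hb : ∀ Θ : Finset (Fin K), Θ.card = 2 →
      ∑ l : Fin L, ∏ k ∈ Θ, X k l = (L : ℝ) * b)
    (hc : ∀ Θ : Finset (Fin K), Θ.card = 3 →
      ∑ l : Fin L, ∏ k ∈ Θ, X k l = (L : ℝ) * c)
    (hab : a ≠ b) (habK : a + ((K : ℝ) - 1) * b ≠ 0)
    (lam : Fin K → ℝ) (hlam : ∀ k, 0 ≤ lam k)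
    (lam_n : ℝ) (hlamn : 0 ≤ lam_n) :
    IsUnit (X * Xᵀ)
    ∧ Matrix.trace ((X * Xᵀ)⁻¹ * X * Matrix.diagonal (Xᵀ.mulVec lam) * Xᵀ
          * (X * Xᵀ)⁻¹)
        + lam_n * Matrix.trace (X * Xᵀ)⁻¹
      = lam_n * (K : ℝ) * (1 - b / (a + ((K : ℝ) - 1) * b))
            / ((L : ℝ) * (a - b))
        + ((∑ k : Fin K, lam k) / ((L : ℝ) * (a - b) ^ 2))
          * (a + ((K : ℝ) - 1) * b
            + ((2 - (K : ℝ)) * b ^ 2 - 2 * a * b)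
                / (a + ((K : ℝ) - 1) * b) ^ 2
              * (a + 3 * b * ((K : ℝ) - 1)
                + c * ((K : ℝ) - 1) * ((K : ℝ) - 2))) :=
  stmt9_general K L hL X h01 a b c ha hb hc hab habK lam lam_n
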